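/- arXiv:1605.06027 — 2 statements merged into one kernel-verified Lean document; each statement's English description precedes it below -/
import Mathlib

section
/- Let S be a subring of a commutative ring R, I an ideal of S, f ∈ (T_n(R))[x], and fix 1 ≤ i ≤ j ≤ n. Then the (i,j)-entry of the left evaluation f(C)_ℓ lies in I for all C ∈ T_n(S) if and only if for every h with i ≤ h ≤ j, the (i,h)-entry of f_{hj}(C) lies in I for all C ∈ T_n(S), where f_{hj} ∈ R[x] is the scalar polynomial formed from the (h,j)-entries of the coefficients of f. -/
/-!
Since `C` and every coefficient `F_k` are upper triangular, the `(i,j)`-entry of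
`f(C)_ℓ = Σ_k C^k F_k` splits as `Σ_{i ≤ h ≤ j} f_{hj}(C)_{ih}`, which gives one direction.
Conversely, replacing `C` by the matrix `C_{≤h}` that keeps only its columns of index `≤ h`
(still triangular with entries in `S`) truncates this sum to `h' ≤ h`; the single term
`f_{hj}(C)_{ih}` is the difference of the evaluations at `C_{≤h}` and `C_{<h}`.
-/

open Finset Matrix Polynomial

namespace Matrix

variable {ι R : Type*}

def maskCols [Zero R] (s : Set ι) [DecidablePred (· ∈ s)] (C : Matrix ι ι R) : Matrix ι ι R :=
  of fun a b => if b ∈ s then C a b else 0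

theorem maskCols_apply_mem {σ : Type*} [Zero R] [SetLike σ R] [ZeroMemClass σ R] {S : σ}
    (s : Set ι) [DecidablePred (· ∈ s)] {C : Matrix ι ι R} (hC : ∀ a b, C a b ∈ S) (a b : ι) :
    C.maskCols s a b ∈ S := by
  simp only [maskCols, of_apply]
  split_ifs
  exacts [hC a b, zero_mem S]

variable [LinearOrder ι]

theorem BlockTriangular.maskCols [Zero R] (s : Set ι) [DecidablePred (· ∈ s)]
    {C : Matrix ι ι R} (hC : C.BlockTriangular id) : (C.maskCols s).BlockTriangular id := by
  intro a b hab
  simp only [Matrix.maskCols, of_apply]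
  split_ifs
  exacts [hC hab, rfl]

variable [Fintype ι]

theorem BlockTriangular.mul_apply_eq_sum_Icc [LocallyFiniteOrder ι] [NonUnitalNonAssocSemiring R]
    {A B : Matrix ι ι R} (hA : A.BlockTriangular id) (hB : B.BlockTriangular id) (i j : ι) :
    (A * B) i j = ∑ h ∈ Icc i j, A i h * B h j := by
  rw [mul_apply]
  refine (sum_subset (subset_univ _) fun h _ hh => ?_).symm
  rcases not_and_or.mp (mem_Icc.not.mp hh) with hih | hhj
  · rw [hA (lt_of_not_ge hih), zero_mul]
  · rw [hB (lt_of_not_ge hhj), mul_zero]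

variable {s : Set ι} [DecidablePred (· ∈ s)]

theorem BlockTriangular.pow_maskCols_apply [Semiring R] {C : Matrix ι ι R}
    (hC : C.BlockTriangular id) (hs : IsLowerSet s) {i : ι} (hi : i ∈ s) (k : ℕ) (m : ι) :
    (C.maskCols s ^ k) i m = if m ∈ s then (C ^ k) i m else 0 := by
  induction k generalizing m with
  | zero =>
    split_ifs with hm
    · rfl
    · rw [pow_zero, one_apply_ne (ne_of_mem_of_not_mem hi hm)]
  | succ k ih =>
    simp only [pow_succ, mul_apply, ih]
    simp only [Matrix.maskCols, of_apply]
    split_ifs with hm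
    · refine sum_congr rfl fun p _ => ?_
      split_ifs with hp
      · rfl
      · -- `p ∉ s` and `m ∈ s` force `m < p` since `s` is a lower set
        simp [hC (lt_of_not_ge fun hpm => hp (hs hpm hm))]
    · simp

theorem BlockTriangular.aeval_maskCols_apply [CommSemiring R] {C : Matrix ι ι R}
    (hC : C.BlockTriangular id) (hs : IsLowerSet s) {i : ι} (hi : i ∈ s) (p : R[X]) (m : ι) :
    aeval (C.maskCols s) p i m = if m ∈ s then aeval C p i m else 0 := by
  induction p using Polynomial.induction_on' with
  | add p q hp hq => split_ifs at hp hq ⊢ <;> simp [hp, hq]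
  | monomial k a =>
    simp only [aeval_monomial, algebraMap_eq_diagonal, diagonal_mul, hC.pow_maskCols_apply hs hi]
    split_ifs <;> simp

end Matrix

namespace Polynomial

variable {ι R : Type*} [Fintype ι] [LinearOrder ι]

/-- The left evaluation `f(C)_ℓ`. -/
def leftEval [Semiring R] (f : (Matrix ι ι R)[X]) (C : Matrix ι ι R) : Matrix ι ι R :=
  ∑ k ∈ f.support, C ^ k * f.coeff k

/-- The scalar polynomial `f_{hj}`. -/
noncomputable def entryPoly [Semiring R] (f : (Matrix ι ι R)[X]) (h j : ι) : R[X] :=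
  ∑ k ∈ f.support, C (f.coeff k h j) * X ^ k

variable [CommSemiring R] {f : (Matrix ι ι R)[X]}

theorem aeval_entryPoly_apply (f : (Matrix ι ι R)[X]) (C : Matrix ι ι R) (h j i m : ι) :
    aeval C (f.entryPoly h j) i m = ∑ k ∈ f.support, (C ^ k) i m * f.coeff k h j := by
  simp only [entryPoly, map_sum, Matrix.sum_apply, _root_.map_mul, aeval_C, map_pow, aeval_X,
    algebraMap_eq_diagonal, diagonal_mul, Pi.algebraMap_apply, Algebra.algebraMap_self,
    RingHom.id_apply]
  exact sum_congr rfl fun k _ => mul_comm _ _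

variable [LocallyFiniteOrder ι]

theorem leftEval_apply_eq_sum (hf : ∀ k, (f.coeff k).BlockTriangular id)
    {C : Matrix ι ι R} (hC : C.BlockTriangular id) (i j : ι) :
    f.leftEval C i j = ∑ h ∈ Icc i j, aeval C (f.entryPoly h j) i h := by
  simp only [leftEval, Matrix.sum_apply, (hC.pow _).mul_apply_eq_sum_Icc (hf _),
    aeval_entryPoly_apply]
  exact sum_comm

theorem leftEval_maskCols_apply (hf : ∀ k, (f.coeff k).BlockTriangular id)
    {C : Matrix ι ι R} (hC : C.BlockTriangular id) {s : Set ι} [DecidablePred (· ∈ s)]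
    (hs : IsLowerSet s) {i : ι} (hi : i ∈ s) (j : ι) :
    f.leftEval (C.maskCols s) i j =
      ∑ h ∈ (Icc i j).filter (· ∈ s), aeval C (f.entryPoly h j) i h := by
  simp only [leftEval_apply_eq_sum hf (hC.maskCols s), hC.aeval_maskCols_apply hs hi, sum_filter]

end Polynomial

theorem Polynomial.leftEval_apply_mem_iff {ι R σ : Type*} [Fintype ι] [LinearOrder ι]
    [LocallyFiniteOrder ι] [CommRing R] [SetLike σ R] [ZeroMemClass σ R] {f : (Matrix ι ι R)[X]}
    (hf : ∀ k, (f.coeff k).BlockTriangular id) (S : σ) (A : AddSubgroup R) (i j : ι) :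
    (∀ C : Matrix ι ι R, C.BlockTriangular id → (∀ a b, C a b ∈ S) → f.leftEval C i j ∈ A) ↔
      ∀ h ∈ Icc i j, ∀ C : Matrix ι ι R, C.BlockTriangular id → (∀ a b, C a b ∈ S) →
        aeval C (f.entryPoly h j) i h ∈ A := by
  constructor
  · intro H h hh C hC hCS
    have hmask : ∀ (s : Set ι) [DecidablePred (· ∈ s)], IsLowerSet s →
        ∑ h' ∈ (Icc i j).filter (· ∈ s), aeval C (f.entryPoly h' j) i h' ∈ A := by
      intro s _ hs
      by_cases hi : i ∈ s
      · rw [← leftEval_maskCols_apply hf hC hs hi]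
        exact H _ (hC.maskCols s) (maskCols_apply_mem s hCS)
      · convert A.zero_mem
        refine sum_eq_zero fun h' hh' => absurd ?_ hi
        rw [mem_filter, mem_Icc] at hh'
        exact hs hh'.1.1 hh'.2
    have hsplit : (Icc i j).filter (· ∈ Set.Iic h) =
        insert h ((Icc i j).filter (· ∈ Set.Iio h)) := by
      ext h'
      simp only [mem_filter, mem_insert, Set.mem_Iic, Set.mem_Iio]
      grind
    have := A.sub_mem (hmask _ (isLowerSet_Iic h)) (hmask _ (isLowerSet_Iio h))
    rwa [hsplit, sum_insert (by simp), add_sub_cancel_right] at this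
  · intro H C hC hCS
    rw [leftEval_apply_eq_sum hf hC]
    exact A.sum_mem fun h hh => H h hh C hC hCS

theorem stmt8_general (n : ℕ) (R : Type*) [CommRing R] (S : Subring R) (I : Ideal S)
    (f : Polynomial (Matrix (Fin n) (Fin n) R))
    (hf : ∀ k, (f.coeff k).BlockTriangular id)
    (i j : Fin n) :
    (∀ C : Matrix (Fin n) (Fin n) R, C.BlockTriangular id → (∀ a b, C a b ∈ S) →
        ∃ s ∈ I, (s : R) = (∑ k ∈ f.support, C ^ k * f.coeff k) i j)
    ↔ ∀ h ∈ Finset.Icc i j,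
        ∀ C : Matrix (Fin n) (Fin n) R, C.BlockTriangular id → (∀ a b, C a b ∈ S) →
          ∃ s ∈ I, (s : R) =
            (Polynomial.aeval C
              (∑ k ∈ f.support, Polynomial.C (f.coeff k h j) * Polynomial.X ^ k)) i h := by
  have hmem (x : R) :
      (∃ s ∈ I, (s : R) = x) ↔ x ∈ I.toAddSubgroup.map S.subtype.toAddMonoidHom := by
    simp [AddSubgroup.mem_map]
  simp only [hmem]
  exact leftEval_apply_mem_iff hf S _ i j

/-- Let `S` be a subring of `R`, `I` an ideal of `S`, `f ∈ (Tₙ(R))[x]`, `i ≤ j`.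
The `(i,j)`-entry of the left evaluation `f(C)_ℓ = Σ_k C^k F_k` lies in `I` for all
`C ∈ Tₙ(S)` iff for every `h` with `i ≤ h ≤ j`, the `(i,h)`-entry of `f_{hj}(C)`
lies in `I` for all `C ∈ Tₙ(S)`. -/
theorem stmt8 (n : ℕ) (R : Type*) [CommRing R] (S : Subring R) (I : Ideal S)
    (f : Polynomial (Matrix (Fin n) (Fin n) R))
    (hf : ∀ k, (f.coeff k).BlockTriangular id)
    (i j : Fin n) (hij : i ≤ j) :
    (∀ C : Matrix (Fin n) (Fin n) R, C.BlockTriangular id → (∀ a b, C a b ∈ S) →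
        ∃ s ∈ I, (s : R) = (∑ k ∈ f.support, C ^ k * f.coeff k) i j)
    ↔ ∀ h ∈ Finset.Icc i j,
        ∀ C : Matrix (Fin n) (Fin n) R, C.BlockTriangular id → (∀ a b, C a b ∈ S) →
          ∃ s ∈ I, (s : R) =
            (Polynomial.aeval C
              (∑ k ∈ f.support, Polynomial.C (f.coeff k h j) * Polynomial.X ^ k)) i h :=
  stmt8_general n R S I f hf i j
end

section
/- Let S be a subring of a commutative ring R and I an ideal of S. A polynomial f ∈ R[x] satisfies f(C) ∈ T_n(I) for all C ∈ T_n(S) if and only if for each k with 0 ≤ k ≤ n−1 there exists some i such that the (i, i+k)-entry of f(C) lies in I for all C ∈ T_{i+k}(S). -/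
/-!
For an upper triangular `C`, the `(a, a + k)` entry of `f(C)` only depends on the diagonal block
of `C` on the indices `a, …, a + k`: restriction to an interval of indices is multiplicative on
upper triangular matrices, hence commutes with evaluating `f`. So each side of the equivalence says
that the top-right entry of `f(D)` lies in `I` for every upper triangular `(k + 1) × (k + 1)`
matrix `D` over `S`: one direction takes diagonal blocks, the other pads `D` with zeros in the
top-left corner.
-/

open Polynomial Matrix

namespace Matrix

variable {ι κ R : Type*} [LinearOrder ι] [Fintype ι] [Fintype κ]

theorem submatrix_mul_of_blockTriangular [NonUnitalNonAssocSemiring R] {A B : Matrix ι ι R}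
    (hA : A.BlockTriangular id) (hB : B.BlockTriangular id) {e : κ → ι}
    (he : Function.Injective e) (he' : (Set.range e).OrdConnected) :
    (A * B).submatrix e e = A.submatrix e e * B.submatrix e e := by
  ext p q
  simp only [submatrix_apply, mul_apply]
  let e' : κ ↪ ι := ⟨e, he⟩
  calc ∑ j, A (e p) j * B j (e q) = ∑ j ∈ Finset.univ.map e', A (e p) j * B j (e q) :=
        (Finset.sum_subset (Finset.subset_univ _) fun j _ hj => ?_).symm
    _ = ∑ j, A (e p) (e j) * B (e j) (e q) := Finset.sum_map _ _ _
  -- a summand vanishes unless `e p ≤ j ≤ e q`, which puts `j` in the range of `e`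
  rcases lt_or_ge j (e p) with hjp | hpj
  · rw [hA hjp, zero_mul]
  rcases lt_or_ge (e q) j with hqj | hjq
  · rw [hB hqj, mul_zero]
  obtain ⟨j', rfl⟩ := he'.out (Set.mem_range_self p) (Set.mem_range_self q) ⟨hpj, hjq⟩
  exact absurd (Finset.mem_map_of_mem e' (Finset.mem_univ j')) hj

variable [DecidableEq ι] [DecidableEq κ]

variable (R) in
@[simps]
def blockTriangularSubmatrixAlgHom [CommSemiring R] {e : κ → ι} (he : Function.Injective e)
    (he' : (Set.range e).OrdConnected) :
    blockTriangularSubalgebra R R (id : ι → ι) →ₐ[R] Matrix κ κ R where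
  toFun M := (M : Matrix ι ι R).submatrix e e
  map_one' := submatrix_one _ he
  map_mul' M N := submatrix_mul_of_blockTriangular M.2 N.2 he he'
  map_zero' := rfl
  map_add' _ _ := rfl
  commutes' r := by
    simp only [Subalgebra.coe_algebraMap, algebraMap_eq_diagonal, submatrix_diagonal _ _ he]
    rfl

theorem aeval_submatrix_of_blockTriangular [CommSemiring R] {C : Matrix ι ι R}
    (hC : C.BlockTriangular id) {e : κ → ι} (he : Function.Injective e)
    (he' : (Set.range e).OrdConnected) (f : R[X]) :
    aeval (C.submatrix e e) f = (aeval C f).submatrix e e := by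
  simpa [aeval_subalgebra_coe] using
    aeval_algHom_apply (blockTriangularSubmatrixAlgHom R he he') ⟨C, hC⟩ f

theorem BlockTriangular.aeval [CommSemiring R] {C : Matrix ι ι R} (hC : C.BlockTriangular id) (f : R[X]) :
    (aeval C f).BlockTriangular id := by
  simpa only [aeval_subalgebra_coe, mem_blockTriangularSubalgebra] using
    (Polynomial.aeval (⟨C, hC⟩ : blockTriangularSubalgebra R R (id : ι → ι)) f).2

end Matrix

namespace Fin

def intervalOrderEmb {m n : ℕ} (a : ℕ) (h : a + m ≤ n) : Fin m ↪o Fin n :=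
  (natAddOrderEmb a).trans (castLEOrderEmb h)

variable {m n : ℕ} {a : ℕ} {h : a + m ≤ n}

@[simp]
theorem val_intervalOrderEmb (j : Fin m) : (intervalOrderEmb a h j : ℕ) = a + j := rfl

theorem ordConnected_range_intervalOrderEmb : (Set.range (intervalOrderEmb a h)).OrdConnected := by
  refine ⟨?_⟩
  rintro _ ⟨p, rfl⟩ _ ⟨q, rfl⟩ j ⟨(hpj : a + p ≤ (j : ℕ)), (hjq : (j : ℕ) ≤ a + q)⟩
  exact ⟨⟨j - a, by omega⟩, Fin.ext (by simp only [val_intervalOrderEmb]; omega)⟩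

end Fin

section

variable {R : Type*} [CommRing R] {S : Subring R}

def CornerEntryInIdeal (I : Ideal S) (f : R[X]) (k : ℕ) : Prop :=
  ∀ D : Matrix (Fin (k + 1)) (Fin (k + 1)) R, D.BlockTriangular id → (∀ a b, D a b ∈ S) →
    ∃ s ∈ I, (s : R) = aeval D f 0 (Fin.last k)

variable {I : Ideal S} {f : R[X]} {k : ℕ}

theorem CornerEntryInIdeal.aeval_apply_mem {n : ℕ} (hk : CornerEntryInIdeal I f k)
    {C : Matrix (Fin n) (Fin n) R} (hC : C.BlockTriangular id) (hCS : ∀ a b, C a b ∈ S)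
    {a b : Fin n} (hab : (a : ℕ) + k = b) : ∃ s ∈ I, (s : R) = aeval C f a b := by
  let w := Fin.intervalOrderEmb (m := k + 1) (n := n) a (by have := b.isLt; omega)
  obtain ⟨s, hs, hsD⟩ := hk (C.submatrix w w) (fun p q hpq => hC (w.strictMono hpq))
    (fun p q => hCS _ _)
  refine ⟨s, hs, hsD.trans ?_⟩
  rw [aeval_submatrix_of_blockTriangular hC w.injective Fin.ordConnected_range_intervalOrderEmb]
  exact congrArg₂ (aeval C f) (Fin.ext (by simp [w])) (Fin.ext (by simp [w, ← hab]))

theorem cornerEntryInIdeal_of_aeval_apply_last_mem (i : ℕ)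
    (hi : ∀ C : Matrix (Fin (i + k + 1)) (Fin (i + k + 1)) R, C.BlockTriangular id →
      (∀ a b, C a b ∈ S) → ∃ s ∈ I,
        (s : R) = aeval C f ⟨i, Nat.lt_succ_of_le (Nat.le_add_right i k)⟩ (Fin.last (i + k))) :
    CornerEntryInIdeal I f k := by
  intro D hD hDS
  let E : Matrix (Fin (i + k + 1)) (Fin (i + k + 1)) R := of fun p q =>
    if h : i ≤ p ∧ i ≤ q then D ⟨p - i, by omega⟩ ⟨q - i, by omega⟩ else 0
  let w := Fin.intervalOrderEmb (m := k + 1) (n := i + k + 1) i (by omega)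
  have hEw : E.submatrix w w = D := by
    ext p q
    simp [E, w]
  have hE : E.BlockTriangular id := by
    rintro p q (hqp : (q : ℕ) < p)
    simp only [E, of_apply]
    split_ifs
    · exact hD (show (⟨q - i, _⟩ : Fin (k + 1)) < ⟨p - i, _⟩ from Fin.mk_lt_mk.2 (by omega))
    · rfl
  have hES : ∀ p q, E p q ∈ S := by
    intro p q
    simp only [E, of_apply]
    split_ifs
    exacts [hDS _ _, S.zero_mem]
  obtain ⟨s, hs, hsE⟩ := hi E hE hES
  refine ⟨s, hs, hsE.trans ?_⟩
  rw [← hEw, aeval_submatrix_of_blockTriangular hE w.injective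
    Fin.ordConnected_range_intervalOrderEmb]
  exact congrArg₂ (aeval E f) (Fin.ext (by simp [w])) (Fin.ext (by simp [w]))

end

/-- `f ∈ R[x]` maps `Tₙ(S)` into `Tₙ(I)` iff for each `0 ≤ k ≤ n-1` there exists
some row index `i` such that the `(i, i+k)`-entry of `f(C)` lies in `I` for all
upper triangular matrices `C` of size `i+k` with entries in `S` (here formulated
with 0-indexed `i`, so matrices have size `i+k+1` and the entry is `(i, i+k)`). -/
theorem stmt10 (n : ℕ) (R : Type*) [CommRing R] (S : Subring R) (I : Ideal S)
    (f : Polynomial R) :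
    (∀ C : Matrix (Fin n) (Fin n) R, C.BlockTriangular id → (∀ a b, C a b ∈ S) →
        (Polynomial.aeval C f).BlockTriangular id ∧
          ∀ a b : Fin n, ∃ s ∈ I, (s : R) = (Polynomial.aeval C f) a b)
    ↔ ∀ k < n, ∃ i : ℕ,
        ∀ C : Matrix (Fin (i + k + 1)) (Fin (i + k + 1)) R, C.BlockTriangular id →
          (∀ a b, C a b ∈ S) →
          ∃ s ∈ I, (s : R) = (Polynomial.aeval C f) ⟨i, by omega⟩ (Fin.last (i + k)) := by
  constructor
  · intro h k hk
    obtain ⟨i, rfl⟩ : ∃ i, n = i + k + 1 := ⟨n - k - 1, by omega⟩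
    exact ⟨i, fun C hC hCS => (h C hC hCS).2 _ _⟩
  · intro h C hC hCS
    have hfC := hC.aeval f
    refine ⟨hfC, fun a b => ?_⟩
    rcases lt_or_ge b a with hba | hab
    · exact ⟨0, I.zero_mem, (hfC hba).symm⟩
    · obtain ⟨i, hi⟩ := h (b - a) (by omega)
      exact (cornerEntryInIdeal_of_aeval_apply_last_mem i hi).aeval_apply_mem hC hCS (by omega)
end
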